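/- arXiv:1812.11201 — 2 statements merged into one kernel-verified Lean document; each statement's English description precedes it below -/
import Mathlib

section
/- Let Ω^t, Ω be Polish spaces and f_t : Ω^t → closed subsets of Ω be a measurable closed-valued correspondence (i.e., {ω : f_t(ω) ∩ O ≠ ∅} is Borel for every open O ⊆ Ω). Define 𝒫_t(ω) = {P ∈ 𝔓(Ω) : supp(P) ⊆ f_t(ω)}. Then the set graph(𝒫_t) = {(ω, P) : P ∈ 𝒫_t(ω)} is a Borel subset of Ω^t × 𝔓(Ω). -/
/-!
Fix a countable basis `B` of `Ω`. A measure charges no open set disjoint from `ft ω` as soon as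
it charges no basic open set disjoint from it, so the graph is the countable intersection over
`U ∈ B` of the sets `{(ω, P) | U ∩ ft ω = ∅ → P U = 0}`. The premise is a measurable condition
on `ω` by measurability of the correspondence, and the conclusion is a closed condition on `P`,
because `P ↦ P U` is lower semicontinuous for open `U` by the portmanteau theorem.
-/

open MeasureTheory Topology

namespace MeasureTheory.ProbabilityMeasure

variable {Ω : Type*} [MeasurableSpace Ω] [TopologicalSpace Ω] [OpensMeasurableSpace Ω]
  [HasOuterApproxClosed Ω]

theorem lowerSemicontinuous_measure_apply_of_isOpen {U : Set Ω} (hU : IsOpen U) :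
    LowerSemicontinuous fun P : ProbabilityMeasure Ω ↦ (P : Measure Ω) U :=
  lowerSemicontinuous_iff_le_liminf.mpr fun _ ↦
    le_liminf_measure_open_of_tendsto Filter.tendsto_id hU

theorem isClosed_setOf_measure_apply_eq_zero {U : Set Ω} (hU : IsOpen U) :
    IsClosed {P : ProbabilityMeasure Ω | (P : Measure Ω) U = 0} := by
  simpa only [Set.preimage, Set.mem_Iic, nonpos_iff_eq_zero] using
    (lowerSemicontinuous_measure_apply_of_isOpen hU).isClosed_preimage 0

end MeasureTheory.ProbabilityMeasure

theorem TopologicalSpace.IsTopologicalBasis.forall_isOpen_disjoint_measure_eq_zero_iff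
    {Ω : Type*} [TopologicalSpace Ω] [MeasurableSpace Ω] {B : Set (Set Ω)} (hBc : B.Countable)
    (hB : IsTopologicalBasis B) (μ : Measure Ω) (F : Set Ω) :
    (∀ O, IsOpen O → O ∩ F = ∅ → μ O = 0) ↔ ∀ U ∈ B, U ∩ F = ∅ → μ U = 0 := by
  refine ⟨fun h U hU ↦ h U (hB.isOpen hU), fun h O hO hOF ↦ ?_⟩
  rw [hB.open_eq_sUnion' hO, Set.sUnion_eq_biUnion,
    measure_biUnion_null_iff (hBc.mono (Set.sep_subset _ _))]
  exact fun U ⟨hUB, hUO⟩ ↦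
    h U hUB (Set.subset_empty_iff.mp (hOF ▸ Set.inter_subset_inter_left F hUO))

theorem stmt1_general {Ωt Ω : Type*}
    [MeasurableSpace Ωt]
    [TopologicalSpace Ω] [PolishSpace Ω] [MeasurableSpace Ω] [BorelSpace Ω]
    (ft : Ωt → Set Ω)
    (hmeas : ∀ O : Set Ω, IsOpen O → MeasurableSet {ω | (ft ω ∩ O).Nonempty}) :
    MeasurableSet[(inferInstance : MeasurableSpace Ωt).prod
        (borel (ProbabilityMeasure Ω))]
      {p : Ωt × ProbabilityMeasure Ω |
        ∀ O : Set Ω, IsOpen O → O ∩ ft p.1 = ∅ → (p.2 : Measure Ω) O = 0} := by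
  let _ : MeasurableSpace (ProbabilityMeasure Ω) := borel (ProbabilityMeasure Ω)
  have : BorelSpace (ProbabilityMeasure Ω) := ⟨rfl⟩
  obtain ⟨B, hBc, -, hB⟩ := TopologicalSpace.exists_countable_basis Ω
  simp_rw [hB.forall_isOpen_disjoint_measure_eq_zero_iff hBc, Set.ofPred_forall]
  refine MeasurableSet.biInter hBc fun U hU ↦ MeasurableSet.imp ?_ ?_
  · have hdisjoint : MeasurableSet {ω | U ∩ ft ω = ∅} := by
      simpa only [Set.compl_ofPred, Set.not_nonempty_iff_eq_empty, Set.inter_comm] using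
        (hmeas U (hB.isOpen hU)).compl
    exact measurable_fst hdisjoint
  · exact measurable_snd
      (ProbabilityMeasure.isClosed_setOf_measure_apply_eq_zero (hB.isOpen hU)).measurableSet

/-- Let `Ωt, Ω` be Polish spaces and `ft` a measurable
closed-valued correspondence from `Ωt` to subsets of `Ω`. Define
`𝒫_t(ω) = {P : supp P ⊆ ft ω}`; since `ft ω` is closed this is the set of
`P` with `P((ft ω)ᶜ) = 0`. Then the graph `{(ω, P) | P ∈ 𝒫_t(ω)}` is a Borel
subset of `Ωt × 𝔓(Ω)` (product of the Borel σ-algebras, with the weak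
topology on probability measures). -/
theorem stmt1 {Ωt Ω : Type*}
    [TopologicalSpace Ωt] [PolishSpace Ωt] [MeasurableSpace Ωt] [BorelSpace Ωt]
    [TopologicalSpace Ω] [PolishSpace Ω] [MeasurableSpace Ω] [BorelSpace Ω]
    (ft : Ωt → Set Ω) (hclosed : ∀ ω, IsClosed (ft ω))
    (hmeas : ∀ O : Set Ω, IsOpen O → MeasurableSet {ω | (ft ω ∩ O).Nonempty}) :
    MeasurableSet[(inferInstance : MeasurableSpace Ωt).prod
        (borel (ProbabilityMeasure Ω))]
      {p : Ωt × ProbabilityMeasure Ω |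
        ∀ O : Set Ω, IsOpen O → O ∩ ft p.1 = ∅ → (p.2 : Measure Ω) O = 0} :=
  stmt1_general ft hmeas
end

section
/- Let K ⊆ ℝ^{d+1} be defined as K = { (H, c) ∈ L × [0, x − π₀] : x − c + H·ΔS ≥ π₁ 𝒫-q.s. }, where L ⊆ ℝ^d is a linear subspace such that H·ΔS = 0 𝒫-q.s. implies H ∈ L^⊥ for H ∈ ℝ^d, and assume the no-arbitrage condition: H·ΔS ≥ 0 𝒫-q.s. implies H·ΔS = 0 𝒫-q.s. Then K is convex, closed, and bounded (hence compact) in ℝ^{d+1}. -/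
/-!
Convexity and closedness of `K` hold for each fixed `ω`, and survive the passage to quasi-sure
statements because a countable union of polar sets is polar. Since `c ≥ 0`, boundedness reduces
to that of `B = {H ∈ L : π₁ - x ≤ H·ΔS q.s.}`. If `Hₙ ∈ B` with `‖Hₙ‖ → ∞`, a limit point `g`
of `Hₙ / ‖Hₙ‖` is a unit vector of `L`, and dividing `π₁ - x ≤ Hₙ·ΔS` by `‖Hₙ‖` gives
`g·ΔS ≥ 0` q.s.; no-arbitrage yields `g·ΔS = 0` q.s., hence `g ∈ L ∩ Lᗮ = 0`, a contradiction.
-/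
open MeasureTheory Set Filter
open scoped RealInnerProductSpace Topology

/-- A property `p` holds `Pc`-quasi-surely if its failure set is `Pc`-polar,
i.e. `P`-null for every `P ∈ Pc` (as outer measure). -/
def QuasiSurely {Ω : Type*} [MeasurableSpace Ω] (Pc : Set (Measure Ω))
    (p : Ω → Prop) : Prop :=
  ∀ P ∈ Pc, P {ω | ¬ p ω} = 0

namespace QuasiSurely

variable {Ω : Type*} [MeasurableSpace Ω] {Pc : Set (Measure Ω)} {p q : Ω → Prop}

theorem iff_forall_ae : QuasiSurely Pc p ↔ ∀ P ∈ Pc, ∀ᵐ ω ∂P, p ω := by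
  simp only [QuasiSurely, ae_iff]

theorem mono (h : QuasiSurely Pc p) (hpq : ∀ ω, p ω → q ω) : QuasiSurely Pc q :=
  iff_forall_ae.2 fun P hP => (iff_forall_ae.1 h P hP).mono hpq

theorem and (hp : QuasiSurely Pc p) (hq : QuasiSurely Pc q) :
    QuasiSurely Pc fun ω => p ω ∧ q ω :=
  iff_forall_ae.2 fun P hP => (iff_forall_ae.1 hp P hP).and (iff_forall_ae.1 hq P hP)

theorem forall_of_countable {ι : Type*} [Countable ι] {p : ι → Ω → Prop}
    (h : ∀ i, QuasiSurely Pc (p i)) : QuasiSurely Pc fun ω => ∀ i, p i ω :=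
  iff_forall_ae.2 fun P hP => ae_all_iff.2 fun i => iff_forall_ae.1 (h i) P hP

end QuasiSurely

section QuasiSureConstraint

variable {Ω X : Type*} [MeasurableSpace Ω] {Pc : Set (Measure Ω)} {C : Ω → Set X}

theorem convex_setOf_quasiSurely_mem {𝕜 : Type*} [Semiring 𝕜] [PartialOrder 𝕜]
    [AddCommMonoid X] [Module 𝕜 X] (hC : ∀ ω, Convex 𝕜 (C ω)) :
    Convex 𝕜 {z | QuasiSurely Pc fun ω => z ∈ C ω} :=
  fun _ hy _ hz _ _ ha hb hab => (hy.and hz).mono fun ω h => hC ω h.1 h.2 ha hb hab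

theorem isClosed_setOf_quasiSurely_mem [TopologicalSpace X] [SequentialSpace X]
    (hC : ∀ ω, IsClosed (C ω)) : IsClosed {z | QuasiSurely Pc fun ω => z ∈ C ω} :=
  IsSeqClosed.isClosed fun _ _ hu hlim => (QuasiSurely.forall_of_countable hu).mono
    fun ω h => (hC ω).mem_of_tendsto hlim (Eventually.of_forall h)

end QuasiSureConstraint

theorem exists_seq_tendsto_normalize_of_not_isBounded {E : Type*} [NormedAddCommGroup E]
    [NormedSpace ℝ E] [ProperSpace E] {S : Set E}
    (hS : ¬ Bornology.IsBounded S) :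
    ∃ (H : ℕ → E) (g : E), (∀ n, H n ∈ S) ∧ Tendsto (fun n => ‖H n‖) atTop atTop ∧
      Tendsto (fun n => ‖H n‖⁻¹ • H n) atTop (𝓝 g) ∧ ‖g‖ = 1 := by
  simp only [isBounded_iff_forall_norm_le, not_exists, not_forall, not_le] at hS
  choose u huS hu using fun n : ℕ => hS n
  have hu0 : ∀ n, u n ≠ 0 := fun n h => by
    simpa [h] using (Nat.cast_nonneg n).trans_lt (hu n)
  have hsphere : ∀ n, ‖u n‖⁻¹ • u n ∈ Metric.sphere (0 : E) 1 := fun n => by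
    rw [mem_sphere_zero_iff_norm, norm_smul, norm_inv, norm_norm,
      inv_mul_cancel₀ (norm_ne_zero_iff.2 (hu0 n))]
  obtain ⟨g, hg, φ, hφ, hlim⟩ := (isCompact_sphere (0 : E) 1).tendsto_subseq hsphere
  refine ⟨u ∘ φ, g, fun n => huS (φ n), ?_, hlim, by simpa using hg⟩
  refine tendsto_atTop_mono (fun n => ?_) tendsto_natCast_atTop_atTop
  exact (Nat.cast_le.2 hφ.le_apply).trans (hu (φ n)).le

theorem inner_nonneg_of_tendsto_normalize {E : Type*} [NormedAddCommGroup E]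
    [InnerProductSpace ℝ E] {H : ℕ → E} {g v : E} {a : ℝ}
    (hH : Tendsto (fun n => ‖H n‖) atTop atTop)
    (hg : Tendsto (fun n => ‖H n‖⁻¹ • H n) atTop (𝓝 g)) (ha : ∀ n, a ≤ ⟪H n, v⟫) :
    0 ≤ ⟪g, v⟫ := by
  have hlower : Tendsto (fun n => ‖H n‖⁻¹ * a) atTop (𝓝 0) := by
    simpa using (tendsto_inv_atTop_zero.comp hH).mul_const a
  refine le_of_tendsto_of_tendsto hlower (hg.inner tendsto_const_nhds) ?_
  filter_upwards [hH.eventually_gt_atTop 0] with n hn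
  rw [real_inner_smul_left]
  exact mul_le_mul_of_nonneg_left (ha n) (inv_nonneg.2 hn.le)

theorem isBounded_setOf_quasiSurely_le_inner {Ω E : Type*} [MeasurableSpace Ω]
    [NormedAddCommGroup E] [InnerProductSpace ℝ E] [FiniteDimensional ℝ E]
    (Pc : Set (Measure Ω)) (ΔS : Ω → E) (L : Submodule ℝ E)
    (hL : ∀ H, QuasiSurely Pc (fun ω => ⟪H, ΔS ω⟫ = 0) → H ∈ Lᗮ)
    (hNA : ∀ H, QuasiSurely Pc (fun ω => 0 ≤ ⟪H, ΔS ω⟫) →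
      QuasiSurely Pc (fun ω => ⟪H, ΔS ω⟫ = 0)) (f : Ω → ℝ) :
    Bornology.IsBounded {H | H ∈ L ∧ QuasiSurely Pc fun ω => f ω ≤ ⟪H, ΔS ω⟫} := by
  by_contra hunb
  obtain ⟨H, g, hHS, hH, hg, hg1⟩ := exists_seq_tendsto_normalize_of_not_isBounded hunb
  have hgL : g ∈ L := L.closed_of_finiteDimensional.mem_of_tendsto hg
    (Eventually.of_forall fun n => L.smul_mem _ (hHS n).1)
  have hgS : QuasiSurely Pc fun ω => 0 ≤ ⟪g, ΔS ω⟫ :=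
    (QuasiSurely.forall_of_countable fun n => (hHS n).2).mono
      fun _ h => inner_nonneg_of_tendsto_normalize hH hg h
  have hg0 : g = 0 := inner_self_eq_zero.1
    (Submodule.inner_right_of_mem_orthogonal hgL (hL g (hNA g hgS)))
  simp [hg0] at hg1

theorem convex_setOf_le_sub_add_inner {E : Type*} [NormedAddCommGroup E]
    [InnerProductSpace ℝ E] (a x : ℝ) (v : E) :
    Convex ℝ {p : E × ℝ | a ≤ x - p.2 + ⟪p.1, v⟫} := by
  intro p hp q hq s t hs ht hst
  simp only [mem_ofPred_eq, Prod.fst_add, Prod.snd_add, Prod.smul_fst, Prod.smul_snd,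
    smul_eq_mul, inner_add_left, real_inner_smul_left] at hp hq ⊢
  obtain rfl : t = 1 - s := by linarith
  nlinarith

theorem stmt7_general {Ω : Type*} [MeasurableSpace Ω] {d : ℕ}
    (Pc : Set (Measure Ω))
    (ΔS : Ω → EuclideanSpace ℝ (Fin d)) (π₁ : Ω → ℝ) (x π₀ : ℝ)
    (L : Submodule ℝ (EuclideanSpace ℝ (Fin d)))
    (hL : ∀ H : EuclideanSpace ℝ (Fin d),
      QuasiSurely Pc (fun ω => ⟪H, ΔS ω⟫ = 0) → H ∈ Lᗮ)
    (hNA : ∀ H : EuclideanSpace ℝ (Fin d),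
      QuasiSurely Pc (fun ω => 0 ≤ ⟪H, ΔS ω⟫) →
      QuasiSurely Pc (fun ω => ⟪H, ΔS ω⟫ = 0))
    (K : Set (EuclideanSpace ℝ (Fin d) × ℝ))
    (hK : K = {p | p.1 ∈ L ∧ p.2 ∈ Icc 0 (x - π₀) ∧
      QuasiSurely Pc (fun ω => π₁ ω ≤ x - p.2 + ⟪p.1, ΔS ω⟫)}) :
    Convex ℝ K ∧ IsClosed K ∧ Bornology.IsBounded K ∧ IsCompact K := by
  set C : Ω → Set (EuclideanSpace ℝ (Fin d) × ℝ) :=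
    fun ω => {p | π₁ ω ≤ x - p.2 + ⟪p.1, ΔS ω⟫}
  have hK' : K = (L ×ˢ Icc 0 (x - π₀)) ∩ {p | QuasiSurely Pc fun ω => p ∈ C ω} := by
    rw [hK]; exact Set.ext fun _ => and_assoc.symm
  have hconv : Convex ℝ K := by
    rw [hK']
    exact (L.convex.prod (convex_Icc _ _)).inter
      (convex_setOf_quasiSurely_mem fun ω => convex_setOf_le_sub_add_inner _ _ _)
  have hclosed : IsClosed K := by
    rw [hK']
    exact (L.closed_of_finiteDimensional.prod isClosed_Icc).inter
      (isClosed_setOf_quasiSurely_mem fun ω => isClosed_le continuous_const (by fun_prop))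
  have hbdd : Bornology.IsBounded K := by
    refine ((isBounded_setOf_quasiSurely_le_inner Pc ΔS L hL hNA fun ω => π₁ ω - x).prod
      (Metric.isBounded_Icc 0 (x - π₀))).subset ?_
    rw [hK]
    rintro p ⟨hpL, hpc, hpS⟩
    exact ⟨⟨hpL, hpS.mono fun ω h => by linarith [hpc.1]⟩, hpc⟩
  exact ⟨hconv, hclosed, hbdd, Metric.isCompact_of_isClosed_isBounded hclosed hbdd⟩

/-- With `K = {(H,c) ∈ L × [0, x − π₀] : x − c + H·ΔS ≥ π₁ Pc-q.s.}`,
where `L` is a linear subspace such that `H·ΔS = 0` q.s. implies `H ∈ L^⊥`,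
and under no-arbitrage (`H·ΔS ≥ 0` q.s. implies `H·ΔS = 0` q.s.), the set `K`
is convex, closed and bounded, hence compact, in `ℝ^{d+1}`. -/
theorem stmt7 {Ω : Type*} [MeasurableSpace Ω] {d : ℕ}
    (Pc : Set (Measure Ω)) (hprob : ∀ P ∈ Pc, IsProbabilityMeasure P)
    (ΔS : Ω → EuclideanSpace ℝ (Fin d)) (π₁ : Ω → ℝ) (x π₀ : ℝ)
    (L : Submodule ℝ (EuclideanSpace ℝ (Fin d)))
    (hL : ∀ H : EuclideanSpace ℝ (Fin d),
      QuasiSurely Pc (fun ω => ⟪H, ΔS ω⟫ = 0) → H ∈ Lᗮ)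
    (hNA : ∀ H : EuclideanSpace ℝ (Fin d),
      QuasiSurely Pc (fun ω => 0 ≤ ⟪H, ΔS ω⟫) →
      QuasiSurely Pc (fun ω => ⟪H, ΔS ω⟫ = 0))
    (K : Set (EuclideanSpace ℝ (Fin d) × ℝ))
    (hK : K = {p | p.1 ∈ L ∧ p.2 ∈ Icc 0 (x - π₀) ∧
      QuasiSurely Pc (fun ω => π₁ ω ≤ x - p.2 + ⟪p.1, ΔS ω⟫)})
    (hne : K.Nonempty) :
    Convex ℝ K ∧ IsClosed K ∧ Bornology.IsBounded K ∧ IsCompact K :=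
  stmt7_general Pc ΔS π₁ x π₀ L hL hNA K hK
end
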